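/- For the flat-start harness process h_{[s,t]} with i.i.d. mean-zero noise of variance σ_ξ², for i ≠ j: E[(h_{[s,t]}(j) − h_{[s,t]}(i))²] = 2σ_ξ² · ∑_{k=0}^{t-s-1} [qᵏ(0,0) − qᵏ(j-i,0)]. -/

import Mathlib

open MeasureTheory ProbabilityTheory

/-- `k`-step transition probabilities of the random walk on `ℤ` with one-step
displacement law `w`, i.e. kernel `p(i,j) = w(j-i)`. -/
noncomputable def pstep (w : ℤ → ℝ) : ℕ → ℤ → ℤ → ℝ
  | 0, i, j => if i = j then 1 else 0
  | k + 1, i, j => ∑' z : ℤ, pstep w k i z * w (j - z)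

lemma pstep_zero (w : ℤ → ℝ) (i j : ℤ) : pstep w 0 i j = if i = j then 1 else 0 := rfl

lemma pstep_succ (w : ℤ → ℝ) (k : ℕ) (i j : ℤ) :
    pstep w (k + 1) i j = ∑' z : ℤ, pstep w k i z * w (j - z) := rfl

lemma pstep_support_finite {w : ℤ → ℝ} (hw : (Function.support w).Finite) :
    ∀ (k : ℕ) (a : ℤ), (Function.support (pstep w k a)).Finite := by
  intro k
  induction k with
  | zero =>
    intro a
    apply (Set.finite_singleton a).subset
    intro x hx
    rw [Function.mem_support, pstep_zero] at hx
    by_contra h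
    simp only [Set.mem_singleton_iff] at h
    exact hx (if_neg (fun hax => h hax.symm))
  | succ k ih =>
    intro a
    apply ((ih a).add hw).subset
    intro x hx
    rw [Function.mem_support, pstep_succ] at hx
    have : ∃ z, pstep w k a z * w (x - z) ≠ 0 := by
      by_contra h
      push_neg at h
      exact hx ((tsum_congr h).trans tsum_zero)
    obtain ⟨z, hz⟩ := this
    have h1 : pstep w k a z ≠ 0 := fun h => hz (by simp [h])
    have h2 : w (x - z) ≠ 0 := fun h => hz (by simp [h])
    have hxz : x = z + (x - z) := by omega
    rw [hxz]
    exact Set.add_mem_add h1 h2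

lemma pstep_shift (w : ℤ → ℝ) : ∀ (k : ℕ) (a x : ℤ), pstep w k a x = pstep w k 0 (x - a) := by
  intro k
  induction k with
  | zero =>
    intro a x
    rw [pstep_zero, pstep_zero]
    simp [eq_comm, sub_eq_zero, eq_comm (a := x)]
  | succ k ih =>
    intro a x
    rw [pstep_succ, pstep_succ,
      ← (Equiv.subRight a).tsum_eq (fun z => pstep w k 0 z * w (x - a - z))]
    apply tsum_congr
    intro z
    rw [ih a z]
    simp only [Equiv.subRight_apply]
    have : x - a - (z - a) = x - z := by ring
    rw [this]

lemma pstep_sq_sum {w : ℤ → ℝ}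
    (n : ℕ) (i j : ℤ) (S : Finset ℤ)
    (hSj : Function.support (pstep w n j) ⊆ S)
    (hSi : Function.support (pstep w n i) ⊆ S) :
    ∑ x ∈ S, (pstep w n j x - pstep w n i x) ^ 2 =
      2 * ((∑' z : ℤ, pstep w n 0 z * pstep w n 0 z) -
        ∑' z : ℤ, pstep w n (j - i) z * pstep w n 0 z) := by
  have hb : ∀ a : ℤ, Function.support (pstep w n a) ⊆ S →
      ∑ x ∈ S, pstep w n a x * pstep w n a x = ∑' z : ℤ, pstep w n 0 z * pstep w n 0 z := by
    intro a hSa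
    have h1 : ∑' x : ℤ, pstep w n a x * pstep w n a x
        = ∑ x ∈ S, pstep w n a x * pstep w n a x := by
      apply tsum_eq_sum
      intro x hx
      have : pstep w n a x = 0 := by
        by_contra h
        exact hx (hSa h)
      simp [this]
    rw [← h1, ← (Equiv.subRight a).tsum_eq (fun z => pstep w n 0 z * pstep w n 0 z)]
    apply tsum_congr
    intro x
    simp only [Equiv.subRight_apply]
    rw [pstep_shift w n a x]
  have hc : ∑ x ∈ S, pstep w n j x * pstep w n i x
      = ∑' z : ℤ, pstep w n (j - i) z * pstep w n 0 z := by
    have h1 : ∑' x : ℤ, pstep w n j x * pstep w n i x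
        = ∑ x ∈ S, pstep w n j x * pstep w n i x := by
      apply tsum_eq_sum
      intro x hx
      have : pstep w n j x = 0 := by
        by_contra h
        exact hx (hSj h)
      simp [this]
    rw [← h1, ← (Equiv.addRight i).tsum_eq (fun x => pstep w n j x * pstep w n i x)]
    apply tsum_congr
    intro z
    simp only [Equiv.coe_addRight]
    rw [pstep_shift w n j (z + i), pstep_shift w n i (z + i), pstep_shift w n (j - i) z]
    have e1 : z + i - j = z - (j - i) := by ring
    have e2 : z + i - i = z := by ring
    rw [e1, e2]
  have expand : ∑ x ∈ S, (pstep w n j x - pstep w n i x) ^ 2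
      = (∑ x ∈ S, pstep w n j x * pstep w n j x)
        + (∑ x ∈ S, pstep w n i x * pstep w n i x)
        - 2 * ∑ x ∈ S, pstep w n j x * pstep w n i x := by
    rw [← Finset.sum_add_distrib, Finset.mul_sum, ← Finset.sum_sub_distrib]
    apply Finset.sum_congr rfl
    intro x _
    ring
  rw [expand, hb j hSj, hb i hSi, hc]
  ring

/-- For the flat-start harness process with i.i.d. mean-zero
noise of variance `σ_ξ²`, and `i ≠ j`,
`E[(h_{[s,t]}(j) − h_{[s,t]}(i))²] = 2σ_ξ² ∑_{k=0}^{t-s-1} [qᵏ(0,0) − qᵏ(j-i,0)]`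
where `qᵏ(x,0) = ∑_z pᵏ(x,z) pᵏ(0,z)`. -/
theorem flat_start_increment_second_moment
    {Ω : Type*} [MeasurableSpace Ω] (μ : Measure Ω) [IsProbabilityMeasure μ]
    (w : ℤ → ℝ)
    (hw_nonneg : ∀ k, 0 ≤ w k) (hw_lt : ∀ k, w k < 1)
    (hw_sum : ∑' k : ℤ, w k = 1)
    (hw_fin : (Function.support w).Finite)
    (ξ : ℤ → ℤ → Ω → ℝ) (σξ : ℝ)
    (hmeas : ∀ k j, Measurable (ξ k j))
    (hindep : iIndepFun
      (fun p : ℤ × ℤ => ξ p.1 p.2) μ)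
    (hident : ∀ p : ℤ × ℤ, IdentDistrib (ξ p.1 p.2) (ξ 0 0) μ μ)
    (hL2 : MemLp (ξ 0 0) 2 μ)
    (hmean : ∫ ω, ξ 0 0 ω ∂μ = 0)
    (hvar : ∫ ω, (ξ 0 0 ω) ^ 2 ∂μ = σξ ^ 2)
    (s t : ℤ) (hst : s < t) (i j : ℤ) (hij : i ≠ j) :
    (∫ ω,
        ((∑' x : ℤ, ∑ k ∈ Finset.Ioc s t, ξ k x ω * pstep w (t - k).toNat j x) -
          ∑' x : ℤ, ∑ k ∈ Finset.Ioc s t, ξ k x ω * pstep w (t - k).toNat i x) ^ 2 ∂μ) =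
      2 * σξ ^ 2 * ∑ k ∈ Finset.range (t - s).toNat,
        ((∑' z : ℤ, pstep w k 0 z * pstep w k 0 z) -
          ∑' z : ℤ, pstep w k (j - i) z * pstep w k 0 z) := by
  classical
  have hfin := pstep_support_finite hw_fin
  set K : Finset ℤ := Finset.Ioc s t with hK
  set S : Finset ℤ := K.biUnion
    (fun k => (hfin (t - k).toNat j).toFinset ∪ (hfin (t - k).toNat i).toFinset) with hS
  have hsubj : ∀ k ∈ K, Function.support (pstep w (t - k).toNat j) ⊆ S := by
    intro k hk x hx
    exact Finset.mem_biUnion.2 ⟨k, hk, Finset.mem_union_left _ ((hfin _ j).mem_toFinset.2 hx)⟩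
  have hsubi : ∀ k ∈ K, Function.support (pstep w (t - k).toNat i) ⊆ S := by
    intro k hk x hx
    exact Finset.mem_biUnion.2 ⟨k, hk, Finset.mem_union_right _ ((hfin _ i).mem_toFinset.2 hx)⟩
  have hzeroj : ∀ x : ℤ, x ∉ S → ∀ k ∈ K, pstep w (t - k).toNat j x = 0 := by
    intro x hx k hk
    by_contra h
    exact hx (hsubj k hk h)
  have hzeroi : ∀ x : ℤ, x ∉ S → ∀ k ∈ K, pstep w (t - k).toNat i x = 0 := by
    intro x hx k hk
    by_contra h
    exact hx (hsubi k hk h)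
  set c : ℤ × ℤ → ℝ :=
    fun p => pstep w (t - p.1).toNat j p.2 - pstep w (t - p.1).toNat i p.2 with hc
  set P : Finset (ℤ × ℤ) := K ×ˢ S with hP
  -- pointwise rewrite of the increment
  have hptw : ∀ ω : Ω,
      ((∑' x : ℤ, ∑ k ∈ K, ξ k x ω * pstep w (t - k).toNat j x) -
        ∑' x : ℤ, ∑ k ∈ K, ξ k x ω * pstep w (t - k).toNat i x)
      = ∑ p ∈ P, ξ p.1 p.2 ω * c p := by
    intro ω
    have hA : (∑' x : ℤ, ∑ k ∈ K, ξ k x ω * pstep w (t - k).toNat j x)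
        = ∑ x ∈ S, ∑ k ∈ K, ξ k x ω * pstep w (t - k).toNat j x := by
      apply tsum_eq_sum
      intro x hx
      exact Finset.sum_eq_zero fun k hk => by rw [hzeroj x hx k hk, mul_zero]
    have hB : (∑' x : ℤ, ∑ k ∈ K, ξ k x ω * pstep w (t - k).toNat i x)
        = ∑ x ∈ S, ∑ k ∈ K, ξ k x ω * pstep w (t - k).toNat i x := by
      apply tsum_eq_sum
      intro x hx
      exact Finset.sum_eq_zero fun k hk => by rw [hzeroi x hx k hk, mul_zero]
    rw [hA, hB, hP, Finset.sum_product, ← Finset.sum_sub_distrib, Finset.sum_comm]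
    apply Finset.sum_congr rfl
    intro x _
    rw [← Finset.sum_sub_distrib]
    apply Finset.sum_congr rfl
    intro k _
    simp only [hc]
    ring
  -- probabilistic facts
  have hmem2 : ∀ p : ℤ × ℤ, MemLp (ξ p.1 p.2) 2 μ := fun p => (hident p).symm.memLp_snd hL2
  have hintg : ∀ p : ℤ × ℤ, Integrable (ξ p.1 p.2) μ :=
    fun p => (hmem2 p).integrable one_le_two
  have hmean' : ∀ p : ℤ × ℤ, ∫ ω, ξ p.1 p.2 ω ∂μ = 0 :=
    fun p => ((hident p).integral_eq).trans hmean
  have hprod_int : ∀ p q : ℤ × ℤ, Integrable (fun ω => ξ p.1 p.2 ω * ξ q.1 q.2 ω) μ := by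
    intro p q
    rcases eq_or_ne p q with rfl | hne
    · simpa [pow_two] using (hmem2 p).integrable_sq
    · exact (hindep.indepFun hne).integrable_mul (hintg p) (hintg q)
  have hcov : ∀ p q : ℤ × ℤ, p ≠ q → ∫ ω, ξ p.1 p.2 ω * ξ q.1 q.2 ω ∂μ = 0 := by
    intro p q hne
    have h : ∫ ω, ξ p.1 p.2 ω * ξ q.1 q.2 ω ∂μ
        = (∫ ω, ξ p.1 p.2 ω ∂μ) * ∫ ω, ξ q.1 q.2 ω ∂μ :=
      (hindep.indepFun hne).integral_mul_eq_mul_integral (hintg p).1 (hintg q).1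
    rw [h, hmean' p, hmean' q, mul_zero]
  have hdiag : ∀ p : ℤ × ℤ, ∫ ω, ξ p.1 p.2 ω * ξ p.1 p.2 ω ∂μ = σξ ^ 2 := by
    intro p
    have h1 : IdentDistrib (fun ω => ξ p.1 p.2 ω ^ 2) (fun ω => ξ 0 0 ω ^ 2) μ μ :=
      (hident p).comp (measurable_id.pow_const 2)
    have h2 := h1.integral_eq.trans hvar
    simpa [pow_two] using h2
  have hYint : ∀ p q : ℤ × ℤ,
      Integrable (fun ω => (ξ p.1 p.2 ω * c p) * (ξ q.1 q.2 ω * c q)) μ := by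
    intro p q
    have h := (hprod_int p q).mul_const (c p * c q)
    have heq : (fun ω => (ξ p.1 p.2 ω * ξ q.1 q.2 ω) * (c p * c q))
        = fun ω => (ξ p.1 p.2 ω * c p) * (ξ q.1 q.2 ω * c q) := by
      funext ω; ring
    rwa [heq] at h
  -- main computation
  calc
    (∫ ω,
        ((∑' x : ℤ, ∑ k ∈ K, ξ k x ω * pstep w (t - k).toNat j x) -
          ∑' x : ℤ, ∑ k ∈ K, ξ k x ω * pstep w (t - k).toNat i x) ^ 2 ∂μ)
        = ∫ ω, ∑ p ∈ P, ∑ q ∈ P, (ξ p.1 p.2 ω * c p) * (ξ q.1 q.2 ω * c q) ∂μ := by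
          apply integral_congr_ae
          filter_upwards with ω
          rw [hptw ω, pow_two, Finset.sum_mul_sum]
    _ = ∑ p ∈ P, ∑ q ∈ P, ∫ ω, (ξ p.1 p.2 ω * c p) * (ξ q.1 q.2 ω * c q) ∂μ := by
          rw [integral_finset_sum _ (fun p _ => integrable_finset_sum _ (fun q _ => hYint p q))]
          exact Finset.sum_congr rfl fun p _ => integral_finset_sum _ (fun q _ => hYint p q)
    _ = ∑ p ∈ P, c p ^ 2 * σξ ^ 2 := by
          apply Finset.sum_congr rfl
          intro p hp
          rw [Finset.sum_eq_single_of_mem p hp]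
          · have heq : (fun ω => (ξ p.1 p.2 ω * c p) * (ξ p.1 p.2 ω * c p))
                = fun ω => (ξ p.1 p.2 ω * ξ p.1 p.2 ω) * (c p * c p) := by
              funext ω; ring
            rw [heq, integral_mul_const, hdiag p]
            ring
          · intro q hq hneq
            have heq : (fun ω => (ξ p.1 p.2 ω * c p) * (ξ q.1 q.2 ω * c q))
                = fun ω => (ξ p.1 p.2 ω * ξ q.1 q.2 ω) * (c p * c q) := by
              funext ω; ring
            rw [heq, integral_mul_const, hcov p q (Ne.symm hneq), zero_mul]
    _ = σξ ^ 2 * ∑ p ∈ P, c p ^ 2 := by rw [Finset.mul_sum]; exact Finset.sum_congr rfl fun p _ => mul_comm _ _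
    _ = σξ ^ 2 * ∑ k ∈ K, (2 * ((∑' z : ℤ, pstep w (t - k).toNat 0 z * pstep w (t - k).toNat 0 z) -
          ∑' z : ℤ, pstep w (t - k).toNat (j - i) z * pstep w (t - k).toNat 0 z)) := by
          congr 1
          rw [hP, Finset.sum_product]
          exact Finset.sum_congr rfl fun k hk =>
            pstep_sq_sum (t - k).toNat i j S (hsubj k hk) (hsubi k hk)
    _ = σξ ^ 2 * ∑ n ∈ Finset.range (t - s).toNat,
          (2 * ((∑' z : ℤ, pstep w n 0 z * pstep w n 0 z) -
            ∑' z : ℤ, pstep w n (j - i) z * pstep w n 0 z)) := by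
          congr 1
          apply Finset.sum_nbij' (fun k => (t - k).toNat) (fun n => t - (n : ℤ))
          · intro k hk
            rw [hK, Finset.mem_Ioc] at hk
            rw [Finset.mem_range]
            omega
          · intro n hn
            rw [Finset.mem_range] at hn
            rw [hK, Finset.mem_Ioc]
            omega
          · intro k hk
            rw [hK, Finset.mem_Ioc] at hk
            omega
          · intro n hn
            rw [Finset.mem_range] at hn
            omega
          · intro k hk
            rfl
    _ = 2 * σξ ^ 2 * ∑ k ∈ Finset.range (t - s).toNat,
          ((∑' z : ℤ, pstep w k 0 z * pstep w k 0 z) -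
            ∑' z : ℤ, pstep w k (j - i) z * pstep w k 0 z) := by
          rw [← Finset.mul_sum]
          ring
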